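/- Fix a finite independent exchange model in which ρ(e) + (1 − ρ(e))·φQ(e) ≤ φN(e) for every e ∈ E. Then with the failure-aware matching policy, adding a single edge to any query set weakly improves the single-stage objective: for every q ⊆ E and every e ∈ E with e ∉ q, V^FA(q) ≤ V^FA(q ∪ {e}). -/
import Mathlib


/-- A structure in an exchange is either a cycle or a chain. -/
inductive StructKind : Type
  | cycle : StructKind
  | chain : StructKind
  deriving DecidableEq

/-- A structure: a list of edges together with a cycle/chain tag. -/
abbrev ExchangeStruct (E : Type) := List E × StructKind

/-- A finite independent exchange model: a finite edge set `E`, nonnegative edge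
weights `w`, a finite set `structs` of structures (lists of distinct edges tagged as
cycles or chains), a nonempty finite collection `matchings` of feasible matchings
(subsets of `structs`), and per-edge probabilities `ρ e` (rejection if queried),
`φQ e` (post-match failure if queried and accepted), `φN e` (post-match failure if
not queried), all in `[0,1]`; all edges are independent. -/
structure ExchangeModel (E : Type) [Fintype E] [DecidableEq E] where
  w : E → ℝ
  w_nonneg : ∀ e, 0 ≤ w e
  structs : Finset (ExchangeStruct E)
  structs_nodup : ∀ c ∈ structs, c.1.Nodup
  matchings : Finset (Finset (ExchangeStruct E))
  matchings_nonempty : matchings.Nonempty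
  matchings_sub : ∀ x ∈ matchings, x ⊆ structs
  ρ : E → ℝ
  φQ : E → ℝ
  φN : E → ℝ
  ρ_mem : ∀ e, ρ e ∈ Set.Icc (0 : ℝ) 1
  φQ_mem : ∀ e, φQ e ∈ Set.Icc (0 : ℝ) 1
  φN_mem : ∀ e, φN e ∈ Set.Icc (0 : ℝ) 1

variable {E : Type} [Fintype E] [DecidableEq E]

/-- Expected final weight of a chain with edge list `es`:
`Σ_{k} w (e_k) · Π_{j ≤ k} s (e_j)`. -/
def chainVal (w s : E → ℝ) : List E → ℝ
  | [] => 0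
  | e :: es => s e * (w e + chainVal w s es)

/-- Expected final weight `G c s` of a structure `c` under per-edge success
probabilities `s`. -/
def structVal (w s : E → ℝ) (c : ExchangeStruct E) : ℝ :=
  match c.2 with
  | .cycle => (c.1.map w).sum * (c.1.map s).prod
  | .chain => chainVal w s c.1

/-- Per-edge success probabilities `s_{q,r}` for query set `q` and rejection set `r`. -/
def succProb (M : ExchangeModel E) (q r : Finset E) : E → ℝ :=
  fun e => if e ∈ r then 0 else if e ∈ q then 1 - M.φQ e else 1 - M.φN e

/-- Probability `P_q r` of rejection set `r ⊆ q`. -/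
def rejProb (M : ExchangeModel E) (q r : Finset E) : ℝ :=
  (∏ e ∈ r, M.ρ e) * ∏ e ∈ q \ r, (1 - M.ρ e)

/-- Expected final weight of a matching `x` under success probabilities `s`. -/
def matchVal (M : ExchangeModel E) (s : E → ℝ) (x : Finset (ExchangeStruct E)) : ℝ :=
  ∑ c ∈ x, structVal M.w s c

/-- The failure-aware optimal expected matching weight `max_{x ∈ M} Σ_{c ∈ x} G(c, s)`. -/
def bestVal (M : ExchangeModel E) (s : E → ℝ) : ℝ :=
  M.matchings.sup' M.matchings_nonempty (matchVal M s)

/-- The failure-aware value `V^FA q` of a query set `q`. -/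
def VFA (M : ExchangeModel E) (q : Finset E) : ℝ :=
  ∑ r ∈ q.powerset, rejProb M q r * bestVal M (succProb M q r)

/-- Nominal weight of (the edge list of) a chain under rejection set `r`: the summed
weight of all edges preceding the first rejected edge. -/
def chainNominal (w : E → ℝ) (r : Finset E) : List E → ℝ
  | [] => 0
  | e :: es => if e ∈ r then 0 else w e + chainNominal w r es

/-- Nominal weight `F c r` of a structure `c` under rejection set `r`. -/
def nominalVal (w : E → ℝ) (r : Finset E) (c : ExchangeStruct E) : ℝ :=
  match c.2 with
  | .cycle => if ∀ e ∈ c.1, e ∉ r then (c.1.map w).sum else 0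
  | .chain => chainNominal w r c.1

/-- `m` is a max-weight selection for query set `q`: to each rejection set `r ⊆ q` it
assigns a feasible matching maximizing the nominal weight `Σ_{c ∈ x} F(c, r)`. -/
def IsMaxWeightSelection (M : ExchangeModel E) (q : Finset E)
    (m : Finset E → Finset (ExchangeStruct E)) : Prop :=
  ∀ r ∈ q.powerset, m r ∈ M.matchings ∧
    ∀ x ∈ M.matchings, ∑ c ∈ x, nominalVal M.w r c ≤ ∑ c ∈ m r, nominalVal M.w r c

/-- The max-weight value `V^MAX (q; m)` of query set `q` under max-weight selection `m`. -/
def VMAX (M : ExchangeModel E) (q : Finset E)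
    (m : Finset E → Finset (ExchangeStruct E)) : ℝ :=
  ∑ r ∈ q.powerset, rejProb M q r * ∑ c ∈ m r, structVal M.w (succProb M q r) c


set_option linter.unusedSectionVars false

lemma chainVal_congr {w s s' : E → ℝ} {l : List E} (h : ∀ f ∈ l, s f = s' f) :
    chainVal w s l = chainVal w s' l := by
  induction l with
  | nil => rfl
  | cons a t ih =>
    simp only [chainVal, h a (by simp), ih (fun f hf => h f (by simp [hf]))]

lemma chainVal_nonneg {w s : E → ℝ} (hw : ∀ f, 0 ≤ w f) (hs : ∀ f, 0 ≤ s f)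
    (l : List E) : 0 ≤ chainVal w s l := by
  induction l with
  | nil => simp [chainVal]
  | cons a t ih => exact mul_nonneg (hs a) (add_nonneg (hw a) ih)

lemma chainVal_mono {w s s' : E → ℝ} (hw : ∀ f, 0 ≤ w f) (hs : ∀ f, 0 ≤ s f)
    (hle : ∀ f, s f ≤ s' f) (l : List E) : chainVal w s l ≤ chainVal w s' l := by
  induction l with
  | nil => simp [chainVal]
  | cons a t ih =>
    exact mul_le_mul (hle a) (by linarith) (add_nonneg (hw a) (chainVal_nonneg hw hs t))
      ((hs a).trans (hle a))

lemma prodVal_nonneg {s : E → ℝ} (hs : ∀ f, 0 ≤ s f) (l : List E) :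
    0 ≤ (l.map s).prod := by
  induction l with
  | nil => simp
  | cons a t ih => simpa using mul_nonneg (hs a) ih

lemma prodVal_mono {s s' : E → ℝ} (hs : ∀ f, 0 ≤ s f)
    (hle : ∀ f, s f ≤ s' f) (l : List E) : (l.map s).prod ≤ (l.map s').prod := by
  induction l with
  | nil => simp
  | cons a t ih =>
    simp only [List.map_cons, List.prod_cons]
    exact mul_le_mul (hle a) ih (prodVal_nonneg hs t) ((hs a).trans (hle a))

lemma chainVal_affine {w s : E → ℝ} {e : E} {a b t1 t2 : ℝ} (hab : a + b = 1)
    {l : List E} (hl : l.Nodup) :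
    a * chainVal w (Function.update s e t1) l + b * chainVal w (Function.update s e t2) l
      = chainVal w (Function.update s e (a * t1 + b * t2)) l := by
  induction l with
  | nil => simp [chainVal]
  | cons f t ih =>
    rcases List.nodup_cons.mp hl with ⟨hf, ht⟩
    by_cases hfe : f = e
    · subst hfe
      have key : ∀ u : ℝ, chainVal w (Function.update s f u) t = chainVal w s t := by
        intro u
        exact chainVal_congr (fun g hg => Function.update_of_ne (by rintro rfl; exact hf hg) _ _)
      simp only [chainVal, Function.update_self, key]
      ring
    · have ih' := ih ht
      simp only [chainVal, Function.update_of_ne hfe]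
      linear_combination (s f) * ih' + (s f) * (w f) * hab

lemma prodVal_affine {s : E → ℝ} {e : E} {a b t1 t2 : ℝ} (hab : a + b = 1)
    {l : List E} (hl : l.Nodup) :
    a * (l.map (Function.update s e t1)).prod + b * (l.map (Function.update s e t2)).prod
      = (l.map (Function.update s e (a * t1 + b * t2))).prod := by
  induction l with
  | nil => simp; linarith
  | cons f t ih =>
    rcases List.nodup_cons.mp hl with ⟨hf, ht⟩
    simp only [List.map_cons, List.prod_cons]
    by_cases hfe : f = e
    · subst hfe
      have key : ∀ u : ℝ, (t.map (Function.update s f u)).prod = (t.map s).prod := by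
        intro u
        congr 1
        exact List.map_congr_left (fun g hg => Function.update_of_ne (by rintro rfl; exact hf hg) _ _)
      simp only [Function.update_self, key]
      ring
    · have ih' := ih ht
      simp only [Function.update_of_ne hfe]
      linear_combination (s f) * ih'

lemma structVal_mono {w s s' : E → ℝ} (hw : ∀ f, 0 ≤ w f) (hs : ∀ f, 0 ≤ s f)
    (hle : ∀ f, s f ≤ s' f) (c : ExchangeStruct E) : structVal w s c ≤ structVal w s' c := by
  obtain ⟨l, k⟩ := c
  cases k
  · simp only [structVal]
    refine mul_le_mul_of_nonneg_left (prodVal_mono hs hle l) (List.sum_nonneg ?_)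
    intro a ha
    obtain ⟨f, _, rfl⟩ := List.mem_map.mp ha
    exact hw f
  · exact chainVal_mono hw hs hle l

lemma structVal_affine {w s : E → ℝ} {e : E} {a b t1 t2 : ℝ} (hab : a + b = 1)
    {c : ExchangeStruct E} (hc : c.1.Nodup) :
    a * structVal w (Function.update s e t1) c + b * structVal w (Function.update s e t2) c
      = structVal w (Function.update s e (a * t1 + b * t2)) c := by
  obtain ⟨l, k⟩ := c
  cases k
  · simp only [structVal]
    linear_combination (l.map w).sum * prodVal_affine (s := s) hab hc
  · exact chainVal_affine hab hc

lemma matchVal_mono (M : ExchangeModel E) {s s' : E → ℝ} (hs : ∀ f, 0 ≤ s f)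
    (hle : ∀ f, s f ≤ s' f) (x : Finset (ExchangeStruct E)) :
    matchVal M s x ≤ matchVal M s' x :=
  Finset.sum_le_sum (fun c _ => structVal_mono M.w_nonneg hs hle c)

lemma matchVal_affine (M : ExchangeModel E) {x : Finset (ExchangeStruct E)}
    (hx : x ∈ M.matchings) {s : E → ℝ} {e : E} {a b t1 t2 : ℝ} (hab : a + b = 1) :
    a * matchVal M (Function.update s e t1) x + b * matchVal M (Function.update s e t2) x
      = matchVal M (Function.update s e (a * t1 + b * t2)) x := by
  unfold matchVal
  rw [Finset.mul_sum, Finset.mul_sum, ← Finset.sum_add_distrib]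
  exact Finset.sum_congr rfl
    (fun c hc => structVal_affine hab (M.structs_nodup c (M.matchings_sub x hx hc)))

lemma succProb_nonneg (M : ExchangeModel E) (q r : Finset E) (f : E) :
    0 ≤ succProb M q r f := by
  unfold succProb
  split_ifs
  · exact le_refl 0
  · linarith [(M.φQ_mem f).2]
  · linarith [(M.φN_mem f).2]

lemma rejProb_nonneg (M : ExchangeModel E) (q r : Finset E) : 0 ≤ rejProb M q r :=
  mul_nonneg (Finset.prod_nonneg fun f _ => (M.ρ_mem f).1)
    (Finset.prod_nonneg fun f _ => by linarith [(M.ρ_mem f).2])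

/-- With the failure-aware matching policy, if querying cannot increase any edge's
overall probability of rejection or failure (`ρ e + (1 - ρ e) · φQ e ≤ φN e` for all
`e`), then adding a single edge to any query set weakly improves the single-stage
objective. -/
theorem VFA_le_VFA_insert
    (M : ExchangeModel E)
    (h : ∀ e, M.ρ e + (1 - M.ρ e) * M.φQ e ≤ M.φN e)
    (q : Finset E) (e : E) (he : e ∉ q) :
    VFA M q ≤ VFA M (insert e q) := by
  
  classical
  have hρ := M.ρ_mem e
  have hQ := M.φQ_mem e
  have hN := M.φN_mem e
  unfold VFA
  rw [Finset.powerset_insert]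
  have hdisj : Disjoint q.powerset (q.powerset.image (insert e)) := by
    rw [Finset.disjoint_left]
    rintro r hr hr2
    obtain ⟨r', hr', rfl⟩ := Finset.mem_image.mp hr2
    exact he (Finset.mem_powerset.mp hr (Finset.mem_insert_self e r'))
  rw [Finset.sum_union hdisj]
  rw [Finset.sum_image (by
    intro r1 h1 r2 h2 hins
    have he1 : e ∉ r1 := fun hh => he (Finset.mem_powerset.mp h1 hh)
    have he2 : e ∉ r2 := fun hh => he (Finset.mem_powerset.mp h2 hh)
    rw [← Finset.erase_insert he1, ← Finset.erase_insert he2, hins])]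
  rw [← Finset.sum_add_distrib]
  refine Finset.sum_le_sum ?_
  intro r hr
  have hrq : r ⊆ q := Finset.mem_powerset.mp hr
  have hre : e ∉ r := fun hh => he (hrq hh)
  have heqr : e ∉ q \ r := by simp [he]
  have hr1 : rejProb M (insert e q) r = (1 - M.ρ e) * rejProb M q r := by
    unfold rejProb
    rw [Finset.insert_sdiff_of_notMem _ hre, Finset.prod_insert heqr]
    ring
  have hsd2 : (insert e q) \ (insert e r) = q \ r := by
    ext f
    simp only [Finset.mem_sdiff, Finset.mem_insert, not_or]
    constructor
    · rintro ⟨hf1, hf2, hf3⟩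
      exact ⟨hf1.resolve_left hf2, hf3⟩
    · rintro ⟨hf1, hf2⟩
      exact ⟨Or.inr hf1, fun hh => he (hh ▸ hf1), hf2⟩
  have hr2 : rejProb M (insert e q) (insert e r) = M.ρ e * rejProb M q r := by
    unfold rejProb
    rw [hsd2, Finset.prod_insert hre]
    ring
  have hs1 : succProb M (insert e q) r = Function.update (succProb M q r) e (1 - M.φQ e) := by
    funext f
    rcases eq_or_ne f e with rfl | hfe
    · simp [succProb, hre]
    · simp [succProb, Function.update_of_ne hfe, Finset.mem_insert, hfe]
  have hs2 : succProb M (insert e q) (insert e r)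
      = Function.update (succProb M q r) e 0 := by
    funext f
    rcases eq_or_ne f e with rfl | hfe
    · simp [succProb]
    · simp [succProb, Function.update_of_ne hfe, Finset.mem_insert, hfe]
  have hs0 : succProb M q r = Function.update (succProb M q r) e (1 - M.φN e) := by
    funext f
    rcases eq_or_ne f e with rfl | hfe
    · simp [succProb, hre, he]
    · simp [Function.update_of_ne hfe]
  rw [hr1, hr2, hs1, hs2]
  set s : E → ℝ := succProb M q r with hsdef
  have hP : 0 ≤ rejProb M q r := rejProb_nonneg M q r
  obtain ⟨x, hx, hxval⟩ := Finset.exists_mem_eq_sup' M.matchings_nonempty (matchVal M s)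
  have hab : (1 - M.ρ e) + M.ρ e = 1 := by ring
  have haff := matchVal_affine M hx (s := s) (e := e)
    (a := 1 - M.ρ e) (b := M.ρ e) (t1 := 1 - M.φQ e) (t2 := 0) hab
  have hsnn : ∀ f, 0 ≤ Function.update s e (1 - M.φN e) f := by
    intro f
    rcases eq_or_ne f e with rfl | hfe
    · simp only [Function.update_self]; linarith [hN.2]
    · rw [Function.update_of_ne hfe]; exact succProb_nonneg M q r f
  have hsle : ∀ f, Function.update s e (1 - M.φN e) f
      ≤ Function.update s e ((1 - M.ρ e) * (1 - M.φQ e) + M.ρ e * 0) f := by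
    intro f
    rcases eq_or_ne f e with heq | hfe
    · subst heq
      simp only [Function.update_self]
      nlinarith [h f]
    · rw [Function.update_of_ne hfe, Function.update_of_ne hfe]
  have hmono : matchVal M (Function.update s e (1 - M.φN e)) x
      ≤ matchVal M (Function.update s e ((1 - M.ρ e) * (1 - M.φQ e) + M.ρ e * 0)) x :=
    matchVal_mono M hsnn hsle x
  have key : bestVal M s ≤ (1 - M.ρ e) * bestVal M (Function.update s e (1 - M.φQ e))
      + M.ρ e * bestVal M (Function.update s e 0) := by
    have hle1 : matchVal M (Function.update s e (1 - M.φQ e)) x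
        ≤ bestVal M (Function.update s e (1 - M.φQ e)) := Finset.le_sup' _ hx
    have hle2 : matchVal M (Function.update s e 0) x
        ≤ bestVal M (Function.update s e 0) := Finset.le_sup' _ hx
    calc bestVal M s = matchVal M s x := hxval
      _ = matchVal M (Function.update s e (1 - M.φN e)) x := by rw [← hs0]
      _ ≤ matchVal M (Function.update s e ((1 - M.ρ e) * (1 - M.φQ e) + M.ρ e * 0)) x := hmono
      _ = (1 - M.ρ e) * matchVal M (Function.update s e (1 - M.φQ e)) x
          + M.ρ e * matchVal M (Function.update s e 0) x := haff.symm
      _ ≤ (1 - M.ρ e) * bestVal M (Function.update s e (1 - M.φQ e))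
          + M.ρ e * bestVal M (Function.update s e 0) :=
        add_le_add (mul_le_mul_of_nonneg_left hle1 (by linarith [hρ.2]))
          (mul_le_mul_of_nonneg_left hle2 hρ.1)
  calc rejProb M q r * bestVal M s
      ≤ rejProb M q r * ((1 - M.ρ e) * bestVal M (Function.update s e (1 - M.φQ e))
        + M.ρ e * bestVal M (Function.update s e 0)) := mul_le_mul_of_nonneg_left key hP
    _ = (1 - M.ρ e) * rejProb M q r * bestVal M (Function.update s e (1 - M.φQ e))
        + M.ρ e * rejProb M q r * bestVal M (Function.update s e 0) := by ring
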